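/- arXiv:2412.14654 — 14 statements merged into one kernel-verified Lean document; each statement's English description precedes it below -/
import Mathlib

section
/- Let A be a finite set of arcs with bounds ℓ, u : A → ℝ satisfying 0 ≤ ℓ_a ≤ u_a for all a. For a subset P ⊆ A (the arcs of a path p), define its best scenario β(P) : A → ℝ by β(P)_a = ℓ_a if a ∈ P and β(P)_a = u_a otherwise, and the cost of a subset Q under a scenario c by c(Q) = ∑_{a ∈ Q} c_a. Then for any subsets P, P' ⊆ A and any scenario c with ℓ ≤ c ≤ u pointwise: if c(P) < c(P') then β(P)(P) < β(P)(P'), and if c(P) ≤ c(P') then β(P)(P) ≤ β(P)(P'). -/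
open Finset

noncomputable def cost {A : Type*} (c : A → ℝ) (Q : Finset A) : ℝ := ∑ a ∈ Q, c a

noncomputable def best {A : Type*} [DecidableEq A] (ℓ u : A → ℝ) (P : Finset A) : A → ℝ :=
  fun a => if a ∈ P then ℓ a else u a

def IsScenario {A : Type*} (ℓ u c : A → ℝ) : Prop := ∀ a, ℓ a ≤ c a ∧ c a ≤ u a

theorem stmt0 {A : Type*} [Fintype A] [DecidableEq A] (ℓ u : A → ℝ)
    (h0 : ∀ a, 0 ≤ ℓ a) (hlu : ∀ a, ℓ a ≤ u a)
    (P P' : Finset A) (c : A → ℝ) (hc : IsScenario ℓ u c) :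
    (cost c P < cost c P' → cost (best ℓ u P) P < cost (best ℓ u P) P') ∧
    (cost c P ≤ cost c P' → cost (best ℓ u P) P ≤ cost (best ℓ u P) P') := by
  have hP : cost (best ℓ u P) P = ∑ a ∈ P ∩ P', ℓ a + ∑ a ∈ P \ P', ℓ a := by
    rw [Finset.sum_inter_add_sum_sdiff]
    exact Finset.sum_congr rfl fun a ha => by simp [best, ha]
  have hP' : cost (best ℓ u P) P' = ∑ a ∈ P' ∩ P, ℓ a + ∑ a ∈ P' \ P, u a := by
    rw [cost, ← Finset.sum_inter_add_sum_sdiff P' P (best ℓ u P)]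
    congr 1
    · exact Finset.sum_congr rfl fun a ha => by
        simp [best, (Finset.mem_inter.mp ha).2]
    · exact Finset.sum_congr rfl fun a ha => by
        simp [best, (Finset.mem_sdiff.mp ha).2]
  have hcP : cost c P = ∑ a ∈ P ∩ P', c a + ∑ a ∈ P \ P', c a :=
    (Finset.sum_inter_add_sum_sdiff P P' c).symm
  have hcP' : cost c P' = ∑ a ∈ P' ∩ P, c a + ∑ a ∈ P' \ P, c a :=
    (Finset.sum_inter_add_sum_sdiff P' P c).symm
  have hIcomm : ∑ a ∈ P ∩ P', c a = ∑ a ∈ P' ∩ P, c a := by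
    rw [Finset.inter_comm]
  have hIcomm2 : ∑ a ∈ P ∩ P', ℓ a = ∑ a ∈ P' ∩ P, ℓ a := by
    rw [Finset.inter_comm]
  have h1 : ∑ a ∈ P \ P', ℓ a ≤ ∑ a ∈ P \ P', c a :=
    Finset.sum_le_sum fun a _ => (hc a).1
  have h2 : ∑ a ∈ P' \ P, c a ≤ ∑ a ∈ P' \ P, u a :=
    Finset.sum_le_sum fun a _ => (hc a).2
  constructor
  · intro h
    rw [hcP, hcP', hIcomm] at h
    rw [hP, hP', hIcomm2]
    linarith
  · intro h
    rw [hcP, hcP', hIcomm] at h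
    rw [hP, hP', hIcomm2]
    linarith
end

section
/- Let A be a finite set with bounds 0 ≤ ℓ ≤ u, and for P ⊆ A let β(P) be the best scenario of P (β(P)_a = ℓ_a for a ∈ P, u_a otherwise) and c(Q) = ∑_{a∈Q} c_a. Then for any subsets P, P' ⊆ A: if β(P')(P) < β(P')(P'), then c(P) < c(P') for every scenario c with ℓ ≤ c ≤ u; similarly, if β(P')(P) ≤ β(P')(P'), then c(P) ≤ c(P') for every such scenario c. -/
open Finset

theorem stmt1 {A : Type*} [Fintype A] [DecidableEq A] (ℓ u : A → ℝ)
    (h0 : ∀ a, 0 ≤ ℓ a) (hlu : ∀ a, ℓ a ≤ u a) (P P' : Finset A) :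
    (cost (best ℓ u P') P < cost (best ℓ u P') P' →
      ∀ c : A → ℝ, IsScenario ℓ u c → cost c P < cost c P') ∧
    (cost (best ℓ u P') P ≤ cost (best ℓ u P') P' →
      ∀ c : A → ℝ, IsScenario ℓ u c → cost c P ≤ cost c P') := by
  have key : ∀ c : A → ℝ, IsScenario ℓ u c →
      cost c P - cost c P' ≤ cost (best ℓ u P') P - cost (best ℓ u P') P' := by
    intro c hc
    rw [cost, cost, cost, cost,
      ← Finset.sum_sdiff_sub_sum_sdiff (s₁ := P') (s₂ := P) (f := c),
      ← Finset.sum_sdiff_sub_sum_sdiff (s₁ := P') (s₂ := P) (f := best ℓ u P')]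
    apply sub_le_sub
    · apply Finset.sum_le_sum
      intro a ha
      have : a ∉ P' := (Finset.mem_sdiff.mp ha).2
      simp [best, this, (hc a).2]
    · apply Finset.sum_le_sum
      intro a ha
      have : a ∈ P' := (Finset.mem_sdiff.mp ha).1
      simp [best, this, (hc a).1]
  constructor
  · intro h c hc
    have := key c hc
    linarith
  · intro h c hc
    have := key c hc
    linarith
end

section
/- Let A be finite with 0 ≤ ℓ ≤ u and let 𝒫 be a finite nonempty collection of subsets of A (the s-t-paths). A subset P ∈ 𝒫 is a shortest path for a scenario c (ℓ ≤ c ≤ u) if c(P) ≤ c(P') for all P' ∈ 𝒫. Then P is a shortest path for some scenario if and only if P is a shortest path with respect to its best scenario β(P). -/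
open Finset

lemma cost_split {A : Type*} [DecidableEq A] (c : A → ℝ) (Q P : Finset A) :
    cost c Q = ∑ a ∈ Q ∩ P, c a + ∑ a ∈ Q \ P, c a :=
  (Finset.sum_inter_add_sum_sdiff Q P c).symm

theorem stmt2 {A : Type*} [Fintype A] [DecidableEq A] (ℓ u : A → ℝ)
    (h0 : ∀ a, 0 ≤ ℓ a) (hlu : ∀ a, ℓ a ≤ u a)
    (Ps : Finset (Finset A)) (hPs : Ps.Nonempty) (P : Finset A) (hP : P ∈ Ps) :
    (∃ c : A → ℝ, IsScenario ℓ u c ∧ ∀ P' ∈ Ps, cost c P ≤ cost c P') ↔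
    (∀ P' ∈ Ps, cost (best ℓ u P) P ≤ cost (best ℓ u P) P') := by
  constructor
  · rintro ⟨c, hsc, hmin⟩ P' hP'
    have hcc := hmin P' hP'
    rw [cost_split c P P', cost_split c P' P, Finset.inter_comm P' P] at hcc
    have h1 : ∑ a ∈ P \ P', c a ≤ ∑ a ∈ P' \ P, c a := by linarith
    have h2 : ∑ a ∈ P \ P', ℓ a ≤ ∑ a ∈ P \ P', c a :=
      Finset.sum_le_sum fun a _ => (hsc a).1
    have h3 : ∑ a ∈ P' \ P, c a ≤ ∑ a ∈ P' \ P, u a :=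
      Finset.sum_le_sum fun a _ => (hsc a).2
    rw [cost_split _ P P', cost_split _ P' P, Finset.inter_comm P' P]
    have e1 : ∑ a ∈ P ∩ P', best ℓ u P a = ∑ a ∈ P ∩ P', ℓ a :=
      Finset.sum_congr rfl fun a ha => if_pos (Finset.mem_inter.mp ha).1
    have e2 : ∑ a ∈ P \ P', best ℓ u P a = ∑ a ∈ P \ P', ℓ a :=
      Finset.sum_congr rfl fun a ha => if_pos (Finset.mem_sdiff.mp ha).1
    have e3 : ∑ a ∈ P' \ P, best ℓ u P a = ∑ a ∈ P' \ P, u a :=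
      Finset.sum_congr rfl fun a ha => if_neg (Finset.mem_sdiff.mp ha).2
    rw [e1, e2, e3]
    linarith
  · intro h
    exact ⟨best ℓ u P, fun a => by
      unfold best; split <;> constructor <;> simp [hlu a], h⟩
end

section
/- Let A be finite with 0 ≤ ℓ ≤ u and 𝒫 a finite nonempty collection of subsets of A. The set of paths that are shortest for some scenario c with ℓ ≤ c ≤ u equals the set of paths that are shortest for some extreme-point scenario, i.e., some c with c_a ∈ {ℓ_a, u_a} for every a ∈ A. -/
open Finset

theorem stmt3 {A : Type*} [Fintype A] [DecidableEq A] (ℓ u : A → ℝ)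
    (h0 : ∀ a, 0 ≤ ℓ a) (hlu : ∀ a, ℓ a ≤ u a)
    (Ps : Finset (Finset A)) (hPs : Ps.Nonempty) :
    {P | P ∈ Ps ∧ ∃ c : A → ℝ, IsScenario ℓ u c ∧ ∀ P' ∈ Ps, cost c P ≤ cost c P'} =
    {P | P ∈ Ps ∧ ∃ c : A → ℝ, (∀ a, c a = ℓ a ∨ c a = u a) ∧
        ∀ P' ∈ Ps, cost c P ≤ cost c P'} := by
  ext P
  simp only [Set.mem_setOf_eq]
  constructor
  · rintro ⟨hP, c, hc, hopt⟩
    refine ⟨hP, best ℓ u P, fun a => by unfold best; split <;> simp, ?_⟩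
    intro P' hP'
    have h1 : cost (best ℓ u P) P = ∑ a ∈ P, ℓ a := by
      unfold cost best
      exact Finset.sum_congr rfl fun a ha => by simp [ha]
    have h2 : cost (best ℓ u P) P' = ∑ a ∈ P' ∩ P, ℓ a + ∑ a ∈ P' \ P, u a := by
      unfold cost best
      rw [← Finset.sum_inter_add_sum_sdiff P' P]
      congr 1
      · exact Finset.sum_congr rfl fun a ha => by simp [(Finset.mem_inter.mp ha).2]
      · exact Finset.sum_congr rfl fun a ha => by simp [(Finset.mem_sdiff.mp ha).2]
    rw [h1, h2, ← Finset.sum_inter_add_sum_sdiff P P', Finset.inter_comm]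
    have key : ∑ a ∈ P \ P', c a ≤ ∑ a ∈ P' \ P, c a := by
      have h := hopt P' hP'
      unfold cost at h
      rw [← Finset.sum_inter_add_sum_sdiff P P', ← Finset.sum_inter_add_sum_sdiff P' P,
        Finset.inter_comm P' P] at h
      linarith
    have hb : ∑ a ∈ P \ P', ℓ a ≤ ∑ a ∈ P \ P', c a :=
      Finset.sum_le_sum fun a _ => (hc a).1
    have hu : ∑ a ∈ P' \ P, c a ≤ ∑ a ∈ P' \ P, u a :=
      Finset.sum_le_sum fun a _ => (hc a).2
    linarith
  · rintro ⟨hP, c, hc, hopt⟩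
    exact ⟨hP, c, fun a => by rcases hc a with h | h <;> rw [h] <;>
      exact ⟨by linarith [hlu a], by linarith [hlu a]⟩, hopt⟩
end

section
/- Define strict dominance: P ≺ P' iff c(P) < c(P') for all scenarios c with ℓ ≤ c ≤ u. Then for subsets P, P' of a finite set A with 0 ≤ ℓ ≤ u: P ≺ P' if and only if β(P')(P) < β(P')(P'). -/
open Finset

theorem stmt5 {A : Type*} [Fintype A] [DecidableEq A] (ℓ u : A → ℝ)
    (h0 : ∀ a, 0 ≤ ℓ a) (hlu : ∀ a, ℓ a ≤ u a) (P P' : Finset A) :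
    (∀ c : A → ℝ, IsScenario ℓ u c → cost c P < cost c P') ↔
    cost (best ℓ u P') P < cost (best ℓ u P') P' := by
  constructor
  · intro h
    apply h
    intro a
    by_cases ha : a ∈ P' <;> simp [best, ha, hlu a]
  · intro h c hc
    have e : ∀ f : A → ℝ, cost f P - cost f P' =
        ∑ a ∈ P \ P', f a - ∑ a ∈ P' \ P, f a := by
      intro f
      unfold cost
      rw [← Finset.sum_inter_add_sum_sdiff P P' f, ← Finset.sum_inter_add_sum_sdiff P' P f,
        Finset.inter_comm]
      ring
    have hb1 : ∑ a ∈ P \ P', c a ≤ ∑ a ∈ P \ P', best ℓ u P' a := by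
      apply Finset.sum_le_sum
      intro a ha
      simp only [best, (Finset.mem_sdiff.mp ha).2, if_false]
      exact (hc a).2
    have hb2 : ∑ a ∈ P' \ P, best ℓ u P' a ≤ ∑ a ∈ P' \ P, c a := by
      apply Finset.sum_le_sum
      intro a ha
      simp only [best, (Finset.mem_sdiff.mp ha).1, if_true]
      exact (hc a).1
    have ec := e c
    have eb := e (best ℓ u P')
    linarith
end

section
/- Define weak dominance: P ⪯ P' iff c(P) ≤ c(P') for all scenarios c ∈ [ℓ,u] and c'(P) < c'(P') for some scenario c' ∈ [ℓ,u]. Then for subsets P, P' of a finite set A with 0 ≤ ℓ ≤ u: P ⪯ P' if and only if β(P')(P) ≤ β(P')(P') and β(P)(P) < β(P)(P'). -/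
open Finset

lemma cost_diff_eq {A : Type*} [DecidableEq A] (c : A → ℝ) (P P' : Finset A) :
    cost c P - cost c P' = ∑ a ∈ P \ P', c a - ∑ a ∈ P' \ P, c a := by
  unfold cost
  rw [← Finset.sum_inter_add_sum_sdiff P P' c, ← Finset.sum_inter_add_sum_sdiff P' P c,
    Finset.inter_comm]
  ring

lemma cost_diff_mono {A : Type*} [DecidableEq A] (c d : A → ℝ) (P P' : Finset A)
    (h1 : ∀ a ∈ P \ P', c a ≤ d a) (h2 : ∀ a ∈ P' \ P, d a ≤ c a) :
    cost c P - cost c P' ≤ cost d P - cost d P' := by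
  rw [cost_diff_eq, cost_diff_eq]
  exact sub_le_sub (Finset.sum_le_sum h1) (Finset.sum_le_sum h2)

lemma best_isScenario {A : Type*} [DecidableEq A] (ℓ u : A → ℝ) (hlu : ∀ a, ℓ a ≤ u a)
    (Q : Finset A) : IsScenario ℓ u (best ℓ u Q) := by
  intro a
  unfold best
  split <;> constructor <;> simp [hlu a]

theorem stmt6 {A : Type*} [Fintype A] [DecidableEq A] (ℓ u : A → ℝ)
    (h0 : ∀ a, 0 ≤ ℓ a) (hlu : ∀ a, ℓ a ≤ u a) (P P' : Finset A) :
    ((∀ c : A → ℝ, IsScenario ℓ u c → cost c P ≤ cost c P') ∧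
      ∃ c' : A → ℝ, IsScenario ℓ u c' ∧ cost c' P < cost c' P') ↔
    (cost (best ℓ u P') P ≤ cost (best ℓ u P') P' ∧
      cost (best ℓ u P) P < cost (best ℓ u P) P') := by
  constructor
  · rintro ⟨h1, c', hc', hlt⟩
    refine ⟨h1 _ (best_isScenario ℓ u hlu P'), ?_⟩
    have key : cost (best ℓ u P) P - cost (best ℓ u P) P' ≤ cost c' P - cost c' P' := by
      apply cost_diff_mono
      · intro a ha
        simp only [Finset.mem_sdiff] at ha
        simp [best, ha.1, (hc' a).1]
      · intro a ha
        simp only [Finset.mem_sdiff] at ha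
        simp [best, ha.2, (hc' a).2]
    linarith
  · rintro ⟨h1, h2⟩
    constructor
    · intro c hc
      have key : cost c P - cost c P' ≤ cost (best ℓ u P') P - cost (best ℓ u P') P' := by
        apply cost_diff_mono
        · intro a ha
          simp only [Finset.mem_sdiff] at ha
          simp [best, ha.2, (hc a).2]
        · intro a ha
          simp only [Finset.mem_sdiff] at ha
          simp [best, ha.1, (hc a).1]
      linarith
    · exact ⟨best ℓ u P, best_isScenario ℓ u hlu P, h2⟩
end

section
/- Define equivalence of paths: P ∼ P' iff c(P) = c(P') for all scenarios c ∈ [ℓ,u]. Then for subsets P, P' of a finite set A with 0 ≤ ℓ ≤ u, the following are equivalent: (1) P ∼ P'; (2) β(P)(P') = β(P)(P) and β(P')(P) = β(P')(P'); (3) β(P)(P') ≤ β(P)(P) and β(P')(P) ≤ β(P')(P'). -/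
open Finset

theorem stmt7 {A : Type*} [Fintype A] [DecidableEq A] (ℓ u : A → ℝ)
    (h0 : ∀ a, 0 ≤ ℓ a) (hlu : ∀ a, ℓ a ≤ u a) (P P' : Finset A) :
    [ (∀ c : A → ℝ, IsScenario ℓ u c → cost c P = cost c P'),
      (cost (best ℓ u P) P' = cost (best ℓ u P) P ∧
        cost (best ℓ u P') P = cost (best ℓ u P') P'),
      (cost (best ℓ u P) P' ≤ cost (best ℓ u P) P ∧
        cost (best ℓ u P') P ≤ cost (best ℓ u P') P') ].TFAE := by
  have hscen : ∀ Q : Finset A, IsScenario ℓ u (best ℓ u Q) := by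
    intro Q a
    unfold best
    by_cases h : a ∈ Q <;> simp [h, hlu a]
  have hcost : ∀ Q R : Finset A,
      cost (best ℓ u Q) R = ∑ a ∈ R ∩ Q, ℓ a + ∑ a ∈ R \ Q, u a := by
    intro Q R
    rw [cost, ← Finset.sum_inter_add_sum_sdiff R Q (best ℓ u Q)]
    congr 1
    · exact Finset.sum_congr rfl fun a ha => by
        simp [best, (Finset.mem_inter.mp ha).2]
    · exact Finset.sum_congr rfl fun a ha => by
        simp [best, (Finset.mem_sdiff.mp ha).2]
  tfae_have 1 → 2 := by
    intro h
    exact ⟨(h _ (hscen P)).symm, h _ (hscen P')⟩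
  tfae_have 2 → 3 := fun h => ⟨le_of_eq h.1, le_of_eq h.2⟩
  tfae_have 3 → 1 := by
    rintro ⟨h1, h2⟩ c hc
    rw [hcost, hcost] at h1 h2
    rw [Finset.inter_comm] at h2
    have hPP : P ∩ P = P := Finset.inter_self P
    have hPP' : P' ∩ P' = P' := Finset.inter_self P'
    rw [hPP, Finset.sdiff_self, Finset.sum_empty, add_zero,
      ← Finset.sum_inter_add_sum_sdiff P P' ℓ, Finset.inter_comm P' P] at h1
    rw [hPP', Finset.sdiff_self, Finset.sum_empty, add_zero,
      ← Finset.sum_inter_add_sum_sdiff P' P ℓ] at h2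
    have h1' : ∑ a ∈ P' \ P, u a ≤ ∑ a ∈ P \ P', ℓ a := le_of_add_le_add_left h1
    have h2' : ∑ a ∈ P \ P', u a ≤ ∑ a ∈ P' \ P, ℓ a := le_of_add_le_add_left h2
    have hl1 : ∑ a ∈ P \ P', ℓ a ≤ ∑ a ∈ P \ P', u a :=
      Finset.sum_le_sum fun a _ => hlu a
    have hl2 : ∑ a ∈ P' \ P, ℓ a ≤ ∑ a ∈ P' \ P, u a :=
      Finset.sum_le_sum fun a _ => hlu a
    -- all four sums are equal
    have e1 : ∑ a ∈ P \ P', ℓ a = ∑ a ∈ P \ P', u a :=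
      le_antisymm hl1 (h2'.trans (hl2.trans h1'))
    have e2 : ∑ a ∈ P' \ P, ℓ a = ∑ a ∈ P' \ P, u a :=
      le_antisymm hl2 (h1'.trans (hl1.trans h2'))
    have e3 : ∑ a ∈ P \ P', ℓ a = ∑ a ∈ P' \ P, ℓ a :=
      le_antisymm (e1 ▸ h2') (e2 ▸ h1')
    have cP : ∑ a ∈ P \ P', c a = ∑ a ∈ P \ P', ℓ a :=
      le_antisymm (e1 ▸ Finset.sum_le_sum fun a _ => (hc a).2)
        (Finset.sum_le_sum fun a _ => (hc a).1)
    have cP' : ∑ a ∈ P' \ P, c a = ∑ a ∈ P' \ P, ℓ a :=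
      le_antisymm (e2 ▸ Finset.sum_le_sum fun a _ => (hc a).2)
        (Finset.sum_le_sum fun a _ => (hc a).1)
    rw [cost, cost, ← Finset.sum_inter_add_sum_sdiff P P' c,
      ← Finset.sum_inter_add_sum_sdiff P' P c, Finset.inter_comm P' P,
      cP, cP', e3]
  tfae_finish
end

section
/- Let A be finite with 0 ≤ ℓ ≤ u and let P, P' ⊆ A be equivalent paths, i.e., c(P) = c(P') for all scenarios c ∈ [ℓ,u]. Then every arc a in the symmetric difference P △ P' satisfies ℓ_a = u_a. -/
open Finset

lemma cost_update_mem {A : Type*} [DecidableEq A] (ℓ : A → ℝ) (a : A) (x : ℝ)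
    (Q : Finset A) (h : a ∈ Q) :
    cost (Function.update ℓ a x) Q = cost ℓ Q + (x - ℓ a) := by
  unfold cost
  rw [← Finset.add_sum_erase _ _ h, ← Finset.add_sum_erase _ ℓ h,
    Function.update_self]
  have : ∀ b ∈ Q.erase a, Function.update ℓ a x b = ℓ b := by
    intro b hb
    exact Function.update_of_ne (Finset.ne_of_mem_erase hb) _ _
  rw [Finset.sum_congr rfl this]
  ring

lemma cost_update_not_mem {A : Type*} [DecidableEq A] (ℓ : A → ℝ) (a : A) (x : ℝ)
    (Q : Finset A) (h : a ∉ Q) :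
    cost (Function.update ℓ a x) Q = cost ℓ Q := by
  unfold cost
  refine Finset.sum_congr rfl fun b hb => ?_
  exact Function.update_of_ne (by rintro rfl; exact h hb) _ _

theorem stmt8 {A : Type*} [Fintype A] [DecidableEq A] (ℓ u : A → ℝ)
    (h0 : ∀ a, 0 ≤ ℓ a) (hlu : ∀ a, ℓ a ≤ u a) (P P' : Finset A)
    (hequiv : ∀ c : A → ℝ, IsScenario ℓ u c → cost c P = cost c P') :
    ∀ a ∈ (P \ P') ∪ (P' \ P), ℓ a = u a := by
  have hℓ : IsScenario ℓ u ℓ := fun a => ⟨le_refl _, hlu a⟩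
  intro a ha
  have hc : IsScenario ℓ u (Function.update ℓ a (u a)) := by
    intro b
    rcases eq_or_ne b a with rfl | hb
    · simp [hlu b]
    · simp [Function.update_of_ne hb, hlu b]
  have h1 := hequiv ℓ hℓ
  have h2 := hequiv _ hc
  rcases Finset.mem_union.mp ha with h | h
  · obtain ⟨hP, hP'⟩ := Finset.mem_sdiff.mp h
    rw [cost_update_mem _ _ _ _ hP, cost_update_not_mem _ _ _ _ hP'] at h2
    linarith
  · obtain ⟨hP', hP⟩ := Finset.mem_sdiff.mp h
    rw [cost_update_mem _ _ _ _ hP', cost_update_not_mem _ _ _ _ hP] at h2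
    linarith
end

section
/- Let A be finite with 0 ≤ ℓ ≤ u and let E denote the finite set of extreme scenarios (c with c_a ∈ {ℓ_a, u_a} for each a). Define the multi-objective weight of P ⊆ A as the vector w(P) = (c(P))_{c∈E} ∈ ℝ^E. Then for subsets P, P': P strictly dominates P' (c(P) < c(P') for all scenarios c ∈ [ℓ,u]) if and only if w(P)_c < w(P')_c for every extreme scenario c ∈ E. -/
open Finset

theorem stmt10 {A : Type*} [Fintype A] [DecidableEq A] (ℓ u : A → ℝ)
    (h0 : ∀ a, 0 ≤ ℓ a) (hlu : ∀ a, ℓ a ≤ u a) (P P' : Finset A) :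
    (∀ c : A → ℝ, IsScenario ℓ u c → cost c P < cost c P') ↔
    (∀ c : A → ℝ, (∀ a, c a = ℓ a ∨ c a = u a) → cost c P < cost c P') := by
  constructor
  · intro h c hc
    exact h c (fun a => by rcases hc a with h1 | h1 <;> simp [h1, hlu a])
  · intro h c hc
    set e : A → ℝ := fun a => if a ∈ P \ P' then u a else ℓ a with he
    have hext : ∀ a, e a = ℓ a ∨ e a = u a := by
      intro a; by_cases ha : a ∈ P \ P'
      · right; simp only [he]; rw [if_pos ha]
      · left; simp only [he]; rw [if_neg ha]
    have hkey := h e hext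
    -- decompose costs
    have hsplit : ∀ f : A → ℝ, cost f P - cost f P' = cost f (P \ P') - cost f (P' \ P) := by
      intro f
      have h1 : cost f (P \ P') + cost f (P ∩ P') = cost f P := by
        unfold cost
        rw [← Finset.sdiff_inter_self_left P P',
          Finset.sum_sdiff_eq_sub (Finset.inter_subset_left)]
        ring
      have h2 : cost f (P' \ P) + cost f (P' ∩ P) = cost f P' := by
        unfold cost
        rw [← Finset.sdiff_inter_self_left P' P,
          Finset.sum_sdiff_eq_sub (Finset.inter_subset_left)]
        ring
      have h3 : cost f (P ∩ P') = cost f (P' ∩ P) := by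
        rw [Finset.inter_comm]
      linarith
    have h1 : cost c (P \ P') ≤ cost e (P \ P') := by
      apply Finset.sum_le_sum
      intro a ha
      simp only [he, if_pos ha]
      exact (hc a).2
    have h2 : cost e (P' \ P) ≤ cost c (P' \ P) := by
      apply Finset.sum_le_sum
      intro a ha
      have : a ∉ P \ P' := by
        simp only [Finset.mem_sdiff] at ha ⊢
        tauto
      simp only [he, if_neg this]
      exact (hc a).1
    have hc1 := hsplit c
    have hc2 := hsplit e
    linarith
end

section
/- Let A be finite with 0 ≤ ℓ ≤ u and E the set of extreme scenarios. For subsets P, P' ⊆ A: P weakly dominates P' (i.e., c(P) ≤ c(P') for all scenarios c ∈ [ℓ,u] and c'(P) < c'(P') for some scenario c' ∈ [ℓ,u]) if and only if w(P)_c ≤ w(P')_c for all c ∈ E and w(P)_{c'} < w(P')_{c'} for some c' ∈ E, where w(P) = (c(P))_{c∈E}. -/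
open Finset

theorem stmt11 {A : Type*} [Fintype A] [DecidableEq A] (ℓ u : A → ℝ)
    (h0 : ∀ a, 0 ≤ ℓ a) (hlu : ∀ a, ℓ a ≤ u a) (P P' : Finset A) :
    ((∀ c : A → ℝ, IsScenario ℓ u c → cost c P ≤ cost c P') ∧
      ∃ c' : A → ℝ, IsScenario ℓ u c' ∧ cost c' P < cost c' P') ↔
    ((∀ c : A → ℝ, (∀ a, c a = ℓ a ∨ c a = u a) → cost c P ≤ cost c P') ∧
      ∃ c' : A → ℝ, (∀ a, c' a = ℓ a ∨ c' a = u a) ∧ cost c' P < cost c' P') := by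
  have key : ∀ c d : A → ℝ, (∀ a ∈ P \ P', c a ≤ d a) → (∀ a ∈ P' \ P, d a ≤ c a) →
      cost c P - cost c P' ≤ cost d P - cost d P' := by
    intro c d h1 h2
    have hc : ∀ (f : A → ℝ), cost f P - cost f P' =
        (∑ a ∈ P \ P', f a) - ∑ a ∈ P' \ P, f a := by
      intro f
      have e1 := Finset.sum_inter_add_sum_sdiff P P' f
      have e2 := Finset.sum_inter_add_sum_sdiff P' P f
      rw [Finset.inter_comm] at e2
      unfold cost
      linarith
    rw [hc c, hc d]
    have g1 : (∑ a ∈ P \ P', c a) ≤ ∑ a ∈ P \ P', d a := Finset.sum_le_sum h1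
    have g2 : (∑ a ∈ P' \ P, d a) ≤ ∑ a ∈ P' \ P, c a := Finset.sum_le_sum h2
    linarith
  have hext : ∀ c : A → ℝ, (∀ a, c a = ℓ a ∨ c a = u a) → IsScenario ℓ u c := by
    intro c hc a
    rcases hc a with h | h <;> rw [h] <;> exact ⟨by simp [hlu a], by simp [hlu a]⟩
  constructor
  · rintro ⟨hall, c', hc', hlt⟩
    refine ⟨fun c hc => hall c (hext c hc), fun a => if a ∈ P then ℓ a else u a,
      fun a => by by_cases h : a ∈ P <;> simp [h], ?_⟩
    have := key (fun a => if a ∈ P then ℓ a else u a) c'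
      (fun a ha => by simp [Finset.mem_sdiff.mp ha |>.1, (hc' a).1])
      (fun a ha => by simp [Finset.mem_sdiff.mp ha |>.2, (hc' a).2])
    linarith
  · rintro ⟨hall, c', hc', hlt⟩
    refine ⟨?_, c', hext c' hc', hlt⟩
    intro c hc
    have := key c (fun a => if a ∈ P \ P' then u a else ℓ a)
      (fun a ha => by simp [ha, (hc a).2])
      (fun a ha => by
        have : a ∉ P \ P' := fun h => (Finset.mem_sdiff.mp h).2 (Finset.mem_sdiff.mp ha).1
        simp [this, (hc a).1])
    have hd := hall (fun a => if a ∈ P \ P' then u a else ℓ a)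
      (fun a => by by_cases h : a ∈ P \ P' <;> simp [h])
    linarith
end

section
/- Let A be finite with 0 ≤ ℓ ≤ u and 𝒫 finite. If P, P' ⊆ A satisfy w(P) = w(P') for the weight vector w(P) = (c(P))_{c∈E} over extreme scenarios E, then c(P) = c(P') for every scenario c with ℓ ≤ c ≤ u. -/
open Finset

theorem stmt12 {A : Type*} [Fintype A] [DecidableEq A] (ℓ u : A → ℝ)
    (h0 : ∀ a, 0 ≤ ℓ a) (hlu : ∀ a, ℓ a ≤ u a) (P P' : Finset A)
    (hw : ∀ c : A → ℝ, (∀ a, c a = ℓ a ∨ c a = u a) → cost c P = cost c P') :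
    ∀ c : A → ℝ, IsScenario ℓ u c → cost c P = cost c P' := by
  intro c hc
  have h1 := hw ℓ (fun b => Or.inl rfl)
  have hdiff : ∀ (d : A → ℝ) (Q : Finset A),
      cost d Q - cost ℓ Q = ∑ a ∈ Q, (d a - ℓ a) := by
    intro d Q
    simp [cost, Finset.sum_sub_distrib]
  have key : ∀ a : A, u a = ℓ a ∨ ((a ∈ P) ↔ (a ∈ P')) := by
    intro a
    by_cases h : (a ∈ P) ↔ (a ∈ P')
    · exact Or.inr h
    left
    have h2 := hw (Function.update ℓ a (u a)) (fun b => by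
      by_cases hb : b = a
      · subst hb; right; simp
      · left; simp [Function.update, hb])
    have hQ : ∀ Q : Finset A,
        ∑ b ∈ Q, (Function.update ℓ a (u a) b - ℓ b)
          = if a ∈ Q then u a - ℓ a else 0 := by
      intro Q
      have : ∀ b ∈ Q, (Function.update ℓ a (u a) b - ℓ b)
          = if b = a then u a - ℓ a else 0 := by
        intro b _
        by_cases hb : b = a
        · subst hb; simp
        · simp [Function.update, hb]
      rw [Finset.sum_congr rfl this, Finset.sum_ite_eq' Q a (fun _ => u a - ℓ a)]
    have e1 := hdiff (Function.update ℓ a (u a)) P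
    have e2 := hdiff (Function.update ℓ a (u a)) P'
    rw [hQ] at e1 e2
    have : (if a ∈ P then u a - ℓ a else 0) = (if a ∈ P' then u a - ℓ a else 0) := by
      rw [← e1, ← e2, h1, h2]
    by_cases hp : a ∈ P
    · have hp' : a ∉ P' := fun hh => h ⟨fun _ => hh, fun _ => hp⟩
      simp [hp, hp'] at this; linarith
    · have hp' : a ∈ P' := by
        by_contra hh
        exact h ⟨fun hx => absurd hx hp, fun hx => absurd hx hh⟩
      simp [hp, hp'] at this; linarith
  have e1 := hdiff c P
  have e2 := hdiff c P'
  have hsum : ∑ a ∈ P, (c a - ℓ a) = ∑ a ∈ P', (c a - ℓ a) := by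
    have hP : ∑ a ∈ P, (c a - ℓ a)
        = ∑ a ∈ Finset.univ, (if a ∈ P then c a - ℓ a else 0) := by
      rw [Finset.sum_ite_mem, Finset.univ_inter]
    have hP' : ∑ a ∈ P', (c a - ℓ a)
        = ∑ a ∈ Finset.univ, (if a ∈ P' then c a - ℓ a else 0) := by
      rw [Finset.sum_ite_mem, Finset.univ_inter]
    rw [hP, hP']
    apply Finset.sum_congr rfl
    intro a _
    rcases key a with hk | hk
    · have : c a = ℓ a := le_antisymm (hk ▸ (hc a).2) (hc a).1
      simp [this]
    · by_cases hp : a ∈ P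
      · simp [hp, hk.mp hp]
      · have hp2 : a ∉ P' := fun hh => hp (hk.mpr hh)
        simp [hp, hp2]
  linarith
end

section
/- Let A be finite with 0 ≤ ℓ ≤ u and 𝒫 a finite nonempty collection of subsets of A. Call S ⊆ 𝒫 scenario-covering if for every scenario c ∈ [ℓ,u] some P ∈ S satisfies c(P) ≤ c(P') for all P' ∈ 𝒫, and essential if S is scenario-covering but no proper subset of S is. If S and S' are both essential sets, then |S| = |S'|; moreover, for each P ∈ S \ S' there is exactly one P' ∈ S' \ S with c(P) = c(P') for all scenarios c ∈ [ℓ,u]. -/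
open Finset

def ScenarioCovering {A : Type*} (ℓ u : A → ℝ) (Ps S : Finset (Finset A)) : Prop :=
  ∀ c : A → ℝ, IsScenario ℓ u c → ∃ P ∈ S, ∀ P' ∈ Ps, cost c P ≤ cost c P'

def Essential {A : Type*} (ℓ u : A → ℝ) (Ps S : Finset (Finset A)) : Prop :=
  ScenarioCovering ℓ u Ps S ∧ ∀ T ⊂ S, ¬ ScenarioCovering ℓ u Ps T

namespace Stmt13

variable {A : Type*} [DecidableEq A]

open Classical in
noncomputable def Mn (Ps : Finset (Finset A)) (c : A → ℝ) : Finset (Finset A) :=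
  Ps.filter (fun Q => ∀ P' ∈ Ps, cost c Q ≤ cost c P')

lemma mem_Mn {Ps : Finset (Finset A)} {c : A → ℝ} {Q : Finset A} :
    Q ∈ Mn Ps c ↔ Q ∈ Ps ∧ ∀ P' ∈ Ps, cost c Q ≤ cost c P' := by
  classical
  simp [Mn]

lemma Mn_subset {Ps : Finset (Finset A)} {c : A → ℝ} : Mn Ps c ⊆ Ps :=
  fun _ h => (mem_Mn.mp h).1

lemma Mn_nonempty {Ps : Finset (Finset A)} (hPs : Ps.Nonempty) (c : A → ℝ) :
    (Mn Ps c).Nonempty := by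
  obtain ⟨Q, hQ, hmin⟩ := Ps.exists_min_image (cost c) hPs
  exact ⟨Q, mem_Mn.mpr ⟨hQ, hmin⟩⟩

lemma best_isScenario {ℓ u : A → ℝ} (hlu : ∀ a, ℓ a ≤ u a) (P : Finset A) :
    IsScenario ℓ u (best ℓ u P) := by
  intro a; by_cases h : a ∈ P <;> simp [best, h] <;> exact hlu a

lemma key_ineq {ℓ u c : A → ℝ} (hc : IsScenario ℓ u c) (P Q : Finset A) :
    cost (best ℓ u P) P - cost (best ℓ u P) Q ≤ cost c P - cost c Q := by
  set d := best ℓ u P with hd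
  have h1 : cost c P - cost d P = ∑ a ∈ P, (c a - d a) := by
    simp [cost, Finset.sum_sub_distrib]
  have h2 : cost c Q - cost d Q = ∑ a ∈ Q, (c a - d a) := by
    simp [cost, Finset.sum_sub_distrib]
  have hsplitP : ∑ a ∈ P ∩ Q, (c a - d a) + ∑ a ∈ P \ Q, (c a - d a)
      = ∑ a ∈ P, (c a - d a) := Finset.sum_inter_add_sum_sdiff P Q _
  have hsplitQ : ∑ a ∈ Q ∩ P, (c a - d a) + ∑ a ∈ Q \ P, (c a - d a)
      = ∑ a ∈ Q, (c a - d a) := Finset.sum_inter_add_sum_sdiff Q P _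
  have hPQ : ∑ a ∈ P ∩ Q, (c a - d a) = ∑ a ∈ Q ∩ P, (c a - d a) := by
    rw [Finset.inter_comm]
  have hpos : 0 ≤ ∑ a ∈ P \ Q, (c a - d a) := Finset.sum_nonneg (by
    intro a ha
    have haP : a ∈ P := (Finset.mem_sdiff.mp ha).1
    have hda : d a = ℓ a := by simp [hd, best, haP]
    have := (hc a).1
    rw [hda]; linarith)
  have hneg : ∑ a ∈ Q \ P, (c a - d a) ≤ 0 := Finset.sum_nonpos (by
    intro a ha
    have haP : a ∉ P := (Finset.mem_sdiff.mp ha).2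
    have hda : d a = u a := by simp [hd, best, haP]
    have := (hc a).2
    rw [hda]; linarith)
  linarith

noncomputable def Mn' (ℓ u : A → ℝ) (Ps : Finset (Finset A)) (P : Finset A) :
    Finset (Finset A) := Mn Ps (best ℓ u P)

lemma MnA {ℓ u c : A → ℝ} {Ps : Finset (Finset A)} (hc : IsScenario ℓ u c)
    {P : Finset A} (hP : P ∈ Mn Ps c) : Mn' ℓ u Ps P ⊆ Mn Ps c := by
  intro Q hQ
  obtain ⟨hQPs, hQmin⟩ := mem_Mn.mp hQ
  obtain ⟨hPPs, hPmin⟩ := mem_Mn.mp hP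
  have h1 : cost (best ℓ u P) Q ≤ cost (best ℓ u P) P := hQmin P hPPs
  have h2 := key_ineq hc P Q
  refine mem_Mn.mpr ⟨hQPs, fun P' hP' => ?_⟩
  have := hPmin P' hP'
  linarith

def IsMinl (ℓ u : A → ℝ) (Ps : Finset (Finset A)) (P : Finset A) : Prop :=
  P ∈ Mn' ℓ u Ps P ∧ ∀ R ∈ Mn' ℓ u Ps P, Mn' ℓ u Ps R = Mn' ℓ u Ps P

lemma minl_trans {ℓ u : A → ℝ} {Ps : Finset (Finset A)} {P R : Finset A}
    (hP : IsMinl ℓ u Ps P) (hR : R ∈ Mn' ℓ u Ps P) :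
    IsMinl ℓ u Ps R ∧ Mn' ℓ u Ps R = Mn' ℓ u Ps P := by
  have he : Mn' ℓ u Ps R = Mn' ℓ u Ps P := hP.2 R hR
  refine ⟨⟨he ▸ hR, fun Q hQ => ?_⟩, he⟩
  rw [he] at hQ ⊢
  exact hP.2 Q hQ

lemma exists_minl_aux {ℓ u : A → ℝ} (hlu : ∀ a, ℓ a ≤ u a) {Ps : Finset (Finset A)}
    (hPs : Ps.Nonempty) :
    ∀ n (P : Finset A), P ∈ Ps → (Mn' ℓ u Ps P).card ≤ n →
      ∃ Q ∈ Mn' ℓ u Ps P, IsMinl ℓ u Ps Q := by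
  intro n
  induction n with
  | zero =>
    intro P hP hcard
    have hne : 0 < (Mn' ℓ u Ps P).card :=
      Finset.card_pos.mpr (Mn_nonempty hPs (best ℓ u P))
    omega
  | succ n ih =>
    intro P hP hcard
    by_cases h : ∀ R ∈ Mn' ℓ u Ps P, Mn' ℓ u Ps R = Mn' ℓ u Ps P
    · obtain ⟨Q, hQ⟩ := Mn_nonempty hPs (best ℓ u P)
      refine ⟨Q, hQ, ?_, ?_⟩
      · rw [h Q hQ]; exact hQ
      · intro R hR
        rw [h Q hQ] at hR ⊢
        exact h R hR
    · push_neg at h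
      obtain ⟨R, hR, hne⟩ := h
      have hsub : Mn' ℓ u Ps R ⊆ Mn' ℓ u Ps P :=
        MnA (best_isScenario hlu P) hR
      have hss : Mn' ℓ u Ps R ⊂ Mn' ℓ u Ps P := ⟨hsub, fun h' => hne (le_antisymm hsub h')⟩
      have hcard' : (Mn' ℓ u Ps R).card ≤ n := by
        have := Finset.card_lt_card hss
        omega
      obtain ⟨Q, hQ, hQm⟩ := ih R (Mn_subset hR) hcard'
      exact ⟨Q, hsub hQ, hQm⟩

lemma exists_minl {ℓ u : A → ℝ} (hlu : ∀ a, ℓ a ≤ u a) {Ps : Finset (Finset A)}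
    (hPs : Ps.Nonempty) (P : Finset A) (hP : P ∈ Ps) :
    ∃ Q ∈ Mn' ℓ u Ps P, IsMinl ℓ u Ps Q :=
  exists_minl_aux hlu hPs (Mn' ℓ u Ps P).card P hP le_rfl

lemma cover_iff {ℓ u : A → ℝ} (hlu : ∀ a, ℓ a ≤ u a) {Ps S : Finset (Finset A)}
    (hPs : Ps.Nonempty) (hSPs : S ⊆ Ps) :
    ScenarioCovering ℓ u Ps S ↔
      ∀ Q, IsMinl ℓ u Ps Q → ∃ s ∈ S, s ∈ Mn' ℓ u Ps Q := by
  constructor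
  · intro hcov Q _
    obtain ⟨s, hsS, hsmin⟩ := hcov (best ℓ u Q) (best_isScenario hlu Q)
    exact ⟨s, hsS, mem_Mn.mpr ⟨hSPs hsS, hsmin⟩⟩
  · intro h c hc
    obtain ⟨P, hP⟩ := Mn_nonempty hPs c
    obtain ⟨Qm, hQm, hQminl⟩ := exists_minl hlu hPs P (Mn_subset hP)
    obtain ⟨s, hsS, hsQm⟩ := h Qm hQminl
    have h1 : Mn' ℓ u Ps Qm ⊆ Mn Ps c :=
      Finset.Subset.trans (MnA (best_isScenario hlu P) hQm) (MnA hc hP)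
    exact ⟨s, hsS, (mem_Mn.mp (h1 hsQm)).2⟩

lemma essential_struct {ℓ u : A → ℝ} (hlu : ∀ a, ℓ a ≤ u a) {Ps S : Finset (Finset A)}
    (hPs : Ps.Nonempty) (hSPs : S ⊆ Ps) (hS : Essential ℓ u Ps S) :
    (∀ s ∈ S, IsMinl ℓ u Ps s) ∧
    (∀ Q, IsMinl ℓ u Ps Q → ∃! s, s ∈ S ∧ s ∈ Mn' ℓ u Ps Q) := by
  have hcov := (cover_iff hlu hPs hSPs).mp hS.1
  constructor
  · intro s hsS
    by_contra hns
    refine hS.2 (S.erase s) (Finset.erase_ssubset hsS) ?_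
    refine (cover_iff hlu hPs (Finset.Subset.trans (Finset.erase_subset _ _) hSPs)).mpr ?_
    intro Q hQ
    obtain ⟨t, htS, htQ⟩ := hcov Q hQ
    refine ⟨t, Finset.mem_erase.mpr ⟨?_, htS⟩, htQ⟩
    rintro rfl
    exact hns (minl_trans hQ htQ).1
  · intro Q hQ
    obtain ⟨s, hsS, hsQ⟩ := hcov Q hQ
    refine ⟨s, ⟨hsS, hsQ⟩, ?_⟩
    intro t ⟨htS, htQ⟩
    by_contra hne
    refine hS.2 (S.erase t) (Finset.erase_ssubset htS) ?_
    refine (cover_iff hlu hPs (Finset.Subset.trans (Finset.erase_subset _ _) hSPs)).mpr ?_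
    intro Q' hQ'
    obtain ⟨r, hrS, hrQ'⟩ := hcov Q' hQ'
    by_cases hrt : r = t
    · subst hrt
      have he1 : Mn' ℓ u Ps r = Mn' ℓ u Ps Q := (minl_trans hQ htQ).2
      have he2 : Mn' ℓ u Ps r = Mn' ℓ u Ps Q' := (minl_trans hQ' hrQ').2
      refine ⟨s, Finset.mem_erase.mpr ⟨Ne.symm hne, hsS⟩, ?_⟩
      rw [← he2, he1]
      exact hsQ
    · exact ⟨r, Finset.mem_erase.mpr ⟨hrt, hrS⟩, hrQ'⟩

lemma equiv_of_mem {ℓ u : A → ℝ} {Ps : Finset (Finset A)} {P Q : Finset A}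
    (hP : P ∈ Ps) (hQ : Q ∈ Mn' ℓ u Ps P)
    {c : A → ℝ} (hc : IsScenario ℓ u c) : cost c Q ≤ cost c P := by
  have h1 : cost (best ℓ u P) Q ≤ cost (best ℓ u P) P := (mem_Mn.mp hQ).2 P hP
  have h2 := key_ineq hc P Q
  linarith

end Stmt13

open Stmt13 in
theorem stmt13 {A : Type*} [Fintype A] [DecidableEq A] (ℓ u : A → ℝ)
    (h0 : ∀ a, 0 ≤ ℓ a) (hlu : ∀ a, ℓ a ≤ u a)
    (Ps S S' : Finset (Finset A)) (hPs : Ps.Nonempty)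
    (hSPs : S ⊆ Ps) (hS'Ps : S' ⊆ Ps)
    (hS : Essential ℓ u Ps S) (hS' : Essential ℓ u Ps S') :
    S.card = S'.card ∧
    ∀ P ∈ S \ S', ∃! P', P' ∈ S' \ S ∧
      ∀ c : A → ℝ, IsScenario ℓ u c → cost c P = cost c P' := by
  obtain ⟨hSm, hSu⟩ := essential_struct hlu hPs hSPs hS
  obtain ⟨hS'm, hS'u⟩ := essential_struct hlu hPs hS'Ps hS'
  -- the canonical partner in S' of an element of S
  have hpart : ∀ s ∈ S, ∃ t, (t ∈ S' ∧ t ∈ Mn' ℓ u Ps s) ∧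
      ∀ t', t' ∈ S' ∧ t' ∈ Mn' ℓ u Ps s → t' = t := by
    intro s hs
    obtain ⟨t, ht, hun⟩ := hS'u s (hSm s hs)
    exact ⟨t, ht, hun⟩
  constructor
  · refine Finset.card_bij (fun s hs => (hpart s hs).choose) ?_ ?_ ?_
    · intro s hs
      exact ((hpart s hs).choose_spec.1).1
    · intro s1 hs1 s2 hs2 heq
      have heq' : (hpart s1 hs1).choose = (hpart s2 hs2).choose := heq
      have h1 : (hpart s1 hs1).choose ∈ Mn' ℓ u Ps s1 := ((hpart s1 hs1).choose_spec.1).2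
      have h2 : (hpart s1 hs1).choose ∈ Mn' ℓ u Ps s2 := by
        rw [heq']; exact ((hpart s2 hs2).choose_spec.1).2
      have e1 : Mn' ℓ u Ps (hpart s1 hs1).choose = Mn' ℓ u Ps s1 :=
        (minl_trans (hSm s1 hs1) h1).2
      have e2 : Mn' ℓ u Ps (hpart s1 hs1).choose = Mn' ℓ u Ps s2 :=
        (minl_trans (hSm s2 hs2) h2).2
      obtain ⟨r, _, hrun⟩ := hSu s1 (hSm s1 hs1)
      have hs1r : s1 = r := hrun s1 ⟨hs1, (hSm s1 hs1).1⟩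
      have hs2r : s2 = r := hrun s2 ⟨hs2, by rw [← e1, e2]; exact (hSm s2 hs2).1⟩
      rw [hs1r, hs2r]
    · intro t ht
      obtain ⟨s, ⟨hsS, hsMn⟩, _⟩ := hSu t (hS'm t ht)
      refine ⟨s, hsS, ?_⟩
      have e1 : Mn' ℓ u Ps s = Mn' ℓ u Ps t := (minl_trans (hS'm t ht) hsMn).2
      exact ((hpart s hsS).choose_spec.2 t ⟨ht, by rw [e1]; exact (hS'm t ht).1⟩).symm
  · intro P hPmem
    obtain ⟨hPS, hPnS'⟩ := Finset.mem_sdiff.mp hPmem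
    have hPminl := hSm P hPS
    obtain ⟨P', ⟨hP'S', hP'Mn⟩, hP'un⟩ := hS'u P hPminl
    have heMn : Mn' ℓ u Ps P' = Mn' ℓ u Ps P := (minl_trans hPminl hP'Mn).2
    have hP'nS : P' ∉ S := by
      intro hP'S
      obtain ⟨r, _, hrun⟩ := hSu P hPminl
      have h1 : P = r := hrun P ⟨hPS, hPminl.1⟩
      have h2 : P' = r := hrun P' ⟨hP'S, hP'Mn⟩
      exact hPnS' (h1 ▸ h2 ▸ hP'S')
    have hPPs : P ∈ Ps := hSPs hPS
    have hP'Ps : P' ∈ Ps := hS'Ps hP'S'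
    have hequiv : ∀ c : A → ℝ, IsScenario ℓ u c → cost c P = cost c P' := by
      intro c hc
      have h1 : cost c P' ≤ cost c P := equiv_of_mem hPPs hP'Mn hc
      have h2 : cost c P ≤ cost c P' := by
        refine equiv_of_mem hP'Ps ?_ hc
        rw [heMn]
        exact hPminl.1
      linarith
    refine ⟨P', ⟨⟨Finset.mem_sdiff.mpr ⟨hP'S', hP'nS⟩, hequiv⟩, ?_⟩⟩
    intro P'' ⟨hP''mem, hP''eq⟩
    obtain ⟨hP''S', _⟩ := Finset.mem_sdiff.mp hP''mem
    refine hP'un P'' ⟨hP''S', ?_⟩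
    refine mem_Mn.mpr ⟨hS'Ps hP''S', fun P1 h1 => ?_⟩
    rw [← hP''eq (best ℓ u P) (best_isScenario hlu P)]
    exact (mem_Mn.mp hPminl.1).2 P1 h1
end

section
/- Let A be finite with 0 ≤ ℓ ≤ u, 𝒫 finite, and let S ⊆ 𝒫 be an essential (inclusion-minimal scenario-covering) set of shortest paths. Then for every P ∈ S and every P' ∈ S with P ≠ P', one has β(P)(P) < β(P)(P'), where β(P) is the best scenario of P. -/
open Finset

lemma key_dominate {A : Type*} [DecidableEq A] (ℓ u : A → ℝ) (P P' : Finset A)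
    (h : cost (best ℓ u P) P' ≤ cost (best ℓ u P) P)
    (c : A → ℝ) (hc : IsScenario ℓ u c) : cost c P' ≤ cost c P := by
  have hsplit : ∀ (f : A → ℝ) (s t : Finset A),
      cost f s = ∑ a ∈ s ∩ t, f a + ∑ a ∈ s \ t, f a := by
    intro f s t
    rw [cost, Finset.sum_inter_add_sum_sdiff]
  have hP : cost (best ℓ u P) P = ∑ a ∈ P ∩ P', ℓ a + ∑ a ∈ P \ P', ℓ a := by
    rw [hsplit _ P P']
    congr 1
    · exact Finset.sum_congr rfl (fun a ha => if_pos (Finset.mem_inter.mp ha).1)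
    · exact Finset.sum_congr rfl (fun a ha => if_pos (Finset.mem_sdiff.mp ha).1)
  have hP' : cost (best ℓ u P) P' = ∑ a ∈ P' ∩ P, ℓ a + ∑ a ∈ P' \ P, u a := by
    rw [hsplit _ P' P]
    congr 1
    · exact Finset.sum_congr rfl (fun a ha => if_pos (Finset.mem_inter.mp ha).2)
    · exact Finset.sum_congr rfl (fun a ha => if_neg (Finset.mem_sdiff.mp ha).2)
  rw [hP, hP', Finset.inter_comm] at h
  have hkey : ∑ a ∈ P' \ P, u a ≤ ∑ a ∈ P \ P', ℓ a := by linarith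
  have h1 : ∑ a ∈ P' \ P, c a ≤ ∑ a ∈ P' \ P, u a :=
    Finset.sum_le_sum (fun a _ => (hc a).2)
  have h2 : ∑ a ∈ P \ P', ℓ a ≤ ∑ a ∈ P \ P', c a :=
    Finset.sum_le_sum (fun a _ => (hc a).1)
  rw [hsplit c P P', hsplit c P' P, Finset.inter_comm]
  linarith

theorem stmt14 {A : Type*} [Fintype A] [DecidableEq A] (ℓ u : A → ℝ)
    (h0 : ∀ a, 0 ≤ ℓ a) (hlu : ∀ a, ℓ a ≤ u a)
    (Ps S : Finset (Finset A)) (hSPs : S ⊆ Ps) (hS : Essential ℓ u Ps S) :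
    ∀ P ∈ S, ∀ P' ∈ S, P ≠ P' →
      cost (best ℓ u P) P < cost (best ℓ u P) P' := by
  intro P hP P' hP' hne
  by_contra hcon
  push_neg at hcon
  have hdom := key_dominate ℓ u P P' hcon
  have hT : ScenarioCovering ℓ u Ps (S.erase P) := by
    intro c hc
    obtain ⟨Q, hQ, hopt⟩ := hS.1 c hc
    by_cases hQP : Q = P
    · refine ⟨P', Finset.mem_erase.mpr ⟨fun h => hne h.symm, hP'⟩, fun R hR => ?_⟩
      calc cost c P' ≤ cost c P := hdom c hc
        _ ≤ cost c R := hQP ▸ hopt R hR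
    · exact ⟨Q, Finset.mem_erase.mpr ⟨hQP, hQ⟩, hopt⟩
  exact hS.2 _ (Finset.erase_ssubset hP) hT
end

section
/- Let A be finite with 0 ≤ ℓ ≤ u. Suppose P strictly dominates P' at the best scenario of P', i.e., β(P')(P) < β(P')(P'). Then for every extension by a common arc set R ⊆ A disjoint from P ∪ P', the extended path P ∪ R still strictly dominates P' ∪ R, i.e., c(P ∪ R) < c(P' ∪ R) for all scenarios c ∈ [ℓ,u]. -/
open Finset

theorem stmt18 {A : Type*} [Fintype A] [DecidableEq A] (ℓ u : A → ℝ)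
    (h0 : ∀ a, 0 ≤ ℓ a) (hlu : ∀ a, ℓ a ≤ u a)
    (P P' R : Finset A)
    (hdom : cost (best ℓ u P') P < cost (best ℓ u P') P')
    (hdisj : Disjoint R (P ∪ P')) :
    ∀ c : A → ℝ, IsScenario ℓ u c → cost c (P ∪ R) < cost c (P' ∪ R) := by
  intro c hc
  set β := best ℓ u P' with hβ
  have key : cost c P < cost c P' := by
    have h1 : cost c (P \ P') ≤ cost β (P \ P') := by
      apply Finset.sum_le_sum
      intro a ha
      have haP' : a ∉ P' := (Finset.mem_sdiff.mp ha).2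
      simp only [hβ, best, if_neg haP']
      exact (hc a).2
    have h2 : cost β (P' \ P) ≤ cost c (P' \ P) := by
      apply Finset.sum_le_sum
      intro a ha
      have haP' : a ∈ P' := (Finset.mem_sdiff.mp ha).1
      simp only [hβ, best, if_pos haP']
      exact (hc a).1
    have e1 : ∀ f : A → ℝ, cost f P = cost f (P ∩ P') + cost f (P \ P') := by
      intro f; exact (Finset.sum_inter_add_sum_sdiff P P' f).symm
    have e2 : ∀ f : A → ℝ, cost f P' = cost f (P' ∩ P) + cost f (P' \ P) := by
      intro f; exact (Finset.sum_inter_add_sum_sdiff P' P f).symm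
    have einter : ∀ f : A → ℝ, cost f (P ∩ P') = cost f (P' ∩ P) := by
      intro f; rw [Finset.inter_comm]
    have hdom' : cost β (P \ P') < cost β (P' \ P) := by
      have := hdom
      rw [e1 β, e2 β, einter β] at this
      linarith
    have := hdom'
    rw [e1 c, e2 c, einter c]
    linarith
  have hR1 : Disjoint P R := (hdisj.mono_right Finset.subset_union_left).symm
  have hR2 : Disjoint P' R := (hdisj.mono_right Finset.subset_union_right).symm
  have s1 : cost c (P ∪ R) = cost c P + cost c R :=
    Finset.sum_union hR1
  have s2 : cost c (P' ∪ R) = cost c P' + cost c R :=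
    Finset.sum_union hR2
  rw [s1, s2]
  linarith
end
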